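/- Let G be a finite non-solvable group in which every element y of order 3 satisfies C_G(y) = ⟨y⟩ (elements of order 3 are self-centralizing), and let x ∈ G be such that the subgroup generated by nil_G(x) is a maximal subgroup of G. Then the cardinality of nil_G(x) is not equal to 6. -/

import Mathlib

/-!
A nilpotent group of order less than 8 is abelian: its center is nontrivial, so the quotient by
the center has order at most 3 and is cyclic. Every subgroup `⟨x, y⟩` with `y ∈ nil_G(x)` lies
inside `nil_G(x)`, so a nilpotentizer with fewer than 8 elements is exactly `C_G(x)`. If it had
6 elements it would contain some `z` of order 3; then `x ∈ C_G(z) = ⟨z⟩`, so `x` has order 3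
(`x ≠ 1` since `nil_G(1) = G`) and `C_G(x) = ⟨x⟩` would have only 3 elements.
-/

/-- The nilpotentizer of `x` in `G`: the set of `y` such that `⟨x, y⟩` is nilpotent. -/
def nilpotentizer {G : Type*} [Group G] (x : G) : Set G :=
  {y | Group.IsNilpotent (Subgroup.closure ({x, y} : Set G))}

open Subgroup

section

variable {G : Type*} [Group G]

theorem isCyclic_of_card_le_three [Finite G] (h : Nat.card G ≤ 3) : IsCyclic G := by
  have : 0 < Nat.card G := Nat.card_pos
  interval_cases hG : Nat.card G
  · exact isCyclic_of_card_dvd_prime (p := 2) (by simp [hG])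
  · exact isCyclic_of_prime_card hG
  · exact isCyclic_of_prime_card hG

theorem Group.IsNilpotent.isMulCommutative_of_card_lt_eight [Finite G] [Group.IsNilpotent G]
    (h : Nat.card G < 8) : IsMulCommutative G := by
  suffices IsCyclic (G ⧸ center G) from isMulCommutative_of_isCyclic_quotient_center_self G
  apply isCyclic_of_card_le_three
  have hcard := card_eq_card_quotient_mul_card_subgroup (center G)
  cases subsingleton_or_nontrivial G
  · simp [Nat.card_unique]
  · have := (one_lt_card_iff_ne_bot _).mpr (Group.IsNilpotent.center_ne_bot G)
    nlinarith

theorem Group.isNilpotent_of_isMulCommutative [IsMulCommutative G] : Group.IsNilpotent G :=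
  ⟨1, upperCentralSeries_one_eq_top_iff.mpr ‹_›⟩

theorem mem_nilpotentizer_of_commute {x y : G} (h : Commute x y) : y ∈ nilpotentizer x := by
  have := isMulCommutative_closure (k := {x, y}) <| by
    rintro a (rfl | rfl) b (rfl | rfl)
    exacts [rfl, h.eq, h.eq.symm, rfl]
  exact Group.isNilpotent_of_isMulCommutative

theorem nilpotentizer_one : nilpotentizer (1 : G) = Set.univ :=
  Set.eq_univ_of_forall fun y ↦ mem_nilpotentizer_of_commute (Commute.one_left y)

theorem closure_pair_subset_nilpotentizer {x y : G} (hy : y ∈ nilpotentizer x) :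
    (closure {x, y} : Set G) ⊆ nilpotentizer x := by
  intro z hz
  have hle : closure {x, z} ≤ closure {x, y} := by
    rw [closure_le]
    rintro w (rfl | rfl)
    exacts [subset_closure (Set.mem_insert w _), hz]
  have : Group.IsNilpotent (closure {x, y}) := hy
  exact Group.nilpotent_of_mulEquiv (subgroupOfEquivOfLe hle)

theorem commute_of_mem_nilpotentizer [Finite G] {x y : G} (hN : Nat.card (nilpotentizer x) < 8)
    (hy : y ∈ nilpotentizer x) : Commute x y := by
  have : Group.IsNilpotent (closure {x, y}) := hy
  have hK : Nat.card (closure {x, y}) < 8 :=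
    (Nat.card_mono (Set.toFinite _) (closure_pair_subset_nilpotentizer hy)).trans_lt hN
  have := Group.IsNilpotent.isMulCommutative_of_card_lt_eight hK
  exact congrArg Subtype.val <| mul_comm'
    (⟨x, subset_closure (by simp)⟩ : closure {x, y}) ⟨y, subset_closure (by simp)⟩

theorem nilpotentizer_eq_centralizer_of_card_lt_eight [Finite G] {x : G}
    (hN : Nat.card (nilpotentizer x) < 8) : nilpotentizer x = centralizer {x} := by
  ext y
  rw [SetLike.mem_coe, mem_centralizer_singleton_iff]
  exact ⟨fun hy ↦ (commute_of_mem_nilpotentizer hN hy).eq.symm,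
    fun hy ↦ mem_nilpotentizer_of_commute hy.symm⟩

theorem card_centralizer_eq_three_of_three_dvd [Finite G]
    (hself : ∀ y : G, orderOf y = 3 → centralizer {y} = zpowers y) {x : G} (hx : x ≠ 1)
    (h3 : 3 ∣ Nat.card (centralizer {x})) : Nat.card (centralizer {x}) = 3 := by
  obtain ⟨z, hz⟩ := exists_prime_orderOf_dvd_card' 3 h3
  rw [← orderOf_coe] at hz
  have hxz : x ∈ zpowers (z : G) :=
    hself _ hz ▸ mem_centralizer_singleton_iff.mpr (mem_centralizer_singleton_iff.mp z.2).symm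
  have hx3 : orderOf x = 3 :=
    (Nat.prime_three.eq_one_or_self_of_dvd _ (hz ▸ orderOf_dvd_of_mem_zpowers hxz)).resolve_left
      (orderOf_eq_one_iff.not.mpr hx)
  rw [hself x hx3, Nat.card_zpowers, hx3]

end

theorem stmt_17_general {G : Type*} [Group G] [Finite G]
    (hself : ∀ y : G, orderOf y = 3 → Subgroup.centralizer {y} = Subgroup.zpowers y)
    (x : G) (hmax : IsCoatom (Subgroup.closure (nilpotentizer x))) :
    Nat.card (nilpotentizer x) ≠ 6 := by
  intro hcard
  have hx : x ≠ 1 := by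
    rintro rfl
    exact hmax.ne_top (by rw [nilpotentizer_one, Subgroup.closure_univ])
  have hC : Nat.card (centralizer {x}) = 6 := by
    rw [← hcard, nilpotentizer_eq_centralizer_of_card_lt_eight (by omega)]
    rfl
  have := card_centralizer_eq_three_of_three_dvd hself hx (by rw [hC]; norm_num)
  omega

theorem stmt_17 {G : Type*} [Group G] [Finite G] (hG : ¬ IsSolvable G)
    (hself : ∀ y : G, orderOf y = 3 → Subgroup.centralizer {y} = Subgroup.zpowers y)
    (x : G) (hmax : IsCoatom (Subgroup.closure (nilpotentizer x))) :
    Nat.card (nilpotentizer x) ≠ 6 :=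
  stmt_17_general hself x hmax
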